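/- arXiv:2404.03433 — 5 statements merged into one kernel-verified Lean document; each statement's English description precedes it below -/
import Mathlib

section
/- Let K₁, K₂ be nonzero Hilbert spaces and A ∈ B(K₂, K₁). Define T on K₁ ⊕ K₂ by the block matrix T = [[I, A], [A*, I + 2A*A]]. Then ‖T‖ = 1 + ‖A‖² + ‖A‖·√(1 + ‖A‖²). -/
/-!
`T` is symmetric with quadratic form `re ⟪T (x, y), (x, y)⟫ = ‖x + A y‖² + ‖y‖² + ‖A y‖² ≥ 0`,
so `‖T‖` is the best constant `c` with form `≤ c (‖x‖² + ‖y‖²)`. Bounding `‖x + A y‖` by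
`‖x‖ + ‖A‖ ‖y‖` reduces the upper bound to the largest eigenvalue `1 + a² + a √(1 + a²)` of the
real matrix `[[1, a], [a, 1 + 2a²]]`, `a = ‖A‖`. Conversely, at the vectors `(s • A y, y)` the
form gives a quadratic in `s` that stays nonnegative, and its discriminant yields
`‖A y‖² (2c - 1) ≤ (c - 1)² ‖y‖²`, which rearranges to `c ≥ 1 + a² + a √(1 + a²)`.
-/

open ContinuousLinearMap RCLike WithLp

namespace ContinuousLinearMap

theorem sq_opNorm_le_of_sq_norm_apply_le {𝕜 E F : Type*} [NontriviallyNormedField 𝕜]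
    [SeminormedAddCommGroup E] [SeminormedAddCommGroup F] [NormedSpace 𝕜 E] [NormedSpace 𝕜 F]
    (A : E →L[𝕜] F) {M : ℝ} (hM : 0 ≤ M) (h : ∀ y, ‖A y‖ ^ 2 ≤ M * ‖y‖ ^ 2) : ‖A‖ ^ 2 ≤ M := by
  have hA : ‖A‖ ≤ √M := A.opNorm_le_bound (Real.sqrt_nonneg M) fun y => by
    rw [← Real.sqrt_sq (norm_nonneg (A y)), ← Real.sqrt_sq (norm_nonneg y), ← Real.sqrt_mul hM]
    exact Real.sqrt_le_sqrt (h y)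
  calc ‖A‖ ^ 2 ≤ √M ^ 2 := by gcongr
    _ = M := Real.sq_sqrt hM

variable {𝕜 E : Type*} [RCLike 𝕜] [NormedAddCommGroup E] [InnerProductSpace 𝕜 E]

theorem re_inner_apply_self_le (T : E →L[𝕜] E) (x : E) :
    re (inner 𝕜 (T x) x) ≤ ‖T‖ * ‖x‖ ^ 2 :=
  calc re (inner 𝕜 (T x) x) ≤ ‖inner 𝕜 (T x) x‖ := re_le_norm _
    _ ≤ ‖T x‖ * ‖x‖ := norm_inner_le_norm _ _
    _ ≤ ‖T‖ * ‖x‖ * ‖x‖ := by gcongr; exact T.le_opNorm x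
    _ = ‖T‖ * ‖x‖ ^ 2 := by ring

theorem opNorm_le_of_abs_re_inner_self_le {T : E →L[𝕜] E} (hT : T.IsSymmetric)
    {C : ℝ} (hC : 0 ≤ C) (h : ∀ x, |re (inner 𝕜 (T x) x)| ≤ C * ‖x‖ ^ 2) : ‖T‖ ≤ C := by
  rw [T.norm_eq_iSup_rayleighQuotient hT]
  refine ciSup_le fun x => ?_
  rw [rayleighQuotient, reApplyInnerSelf_apply, abs_div, abs_sq]
  exact div_le_of_le_mul₀ (by positivity) hC (h x)

end ContinuousLinearMap

theorem le_one_add_sq_add_mul_sqrt_mul {a : ℝ} (ha : 0 ≤ a) (u v : ℝ) :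
    (u + a * v) ^ 2 + v ^ 2 + (a * v) ^ 2 ≤ (1 + a ^ 2 + a * √(1 + a ^ 2)) * (u ^ 2 + v ^ 2) := by
  set r := √(1 + a ^ 2)
  have hr : r ^ 2 = 1 + a ^ 2 := Real.sq_sqrt (by positivity)
  have har : 0 < a + r := by positivity
  have hX : 0 ≤ (a + r) * u ^ 2 - 2 * u * v + (r - a) * v ^ 2 := by
    refine nonneg_of_mul_nonneg_right ?_ har
    nlinarith [sq_nonneg ((a + r) * u - v)]
  nlinarith [mul_nonneg ha hX]

theorem one_add_sq_add_mul_sqrt_le {a c : ℝ} (ha : 0 ≤ a) (hc : 1 ≤ c)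
    (h : a ^ 2 ≤ (c - 1) ^ 2 / (2 * c - 1)) : 1 + a ^ 2 + a * √(1 + a ^ 2) ≤ c := by
  rw [le_div_iff₀ (by linarith)] at h
  have hk : a ^ 2 ≤ c - 1 := by nlinarith
  have hsq : (a * √(1 + a ^ 2)) ^ 2 ≤ (c - 1 - a ^ 2) ^ 2 := by
    rw [mul_pow, Real.sq_sqrt (by positivity)]
    nlinarith
  have := (pow_le_pow_iff_left₀ (by positivity) (by linarith) two_ne_zero).1 hsq
  linarith

theorem mul_two_mul_sub_one_le_of_forall_le {u w c : ℝ} (hu : 0 ≤ u) (hw : 0 ≤ w)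
    (h : ∀ s : ℝ, (s + 1) ^ 2 * w + u + w ≤ c * (s ^ 2 * w + u)) :
    w * (2 * c - 1) ≤ (c - 1) ^ 2 * u := by
  obtain rfl | hw := hw.eq_or_lt
  · simpa using mul_nonneg (sq_nonneg (c - 1)) hu
  have hD := discrim_le_zero (a := (c - 1) * w) (b := -2 * w) (c := (c - 1) * u - 2 * w)
    fun s => by nlinarith [h s]
  rw [discrim] at hD
  nlinarith

section BlockOperator

variable {𝕜 K₁ K₂ : Type*} [RCLike 𝕜]
  [NormedAddCommGroup K₁] [InnerProductSpace 𝕜 K₁] [CompleteSpace K₁]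
  [NormedAddCommGroup K₂] [InnerProductSpace 𝕜 K₂] [CompleteSpace K₂]

def IsBlockOperator (A : K₂ →L[𝕜] K₁) (T : WithLp 2 (K₁ × K₂) →L[𝕜] WithLp 2 (K₁ × K₂)) :
    Prop :=
  ∀ x y, T (toLp 2 (x, y)) = toLp 2 (x + A y, adjoint A x + (y + 2 • adjoint A (A y)))

variable {A : K₂ →L[𝕜] K₁} {T : WithLp 2 (K₁ × K₂) →L[𝕜] WithLp 2 (K₁ × K₂)}

namespace IsBlockOperator

theorem isSymmetric (hT : IsBlockOperator A T) : T.IsSymmetric := by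
  rintro ⟨x, y⟩ ⟨x', y'⟩
  simp only [coe_coe, hT x y, hT x' y', prod_inner_apply, inner_add_left, inner_add_right,
    two_smul, adjoint_inner_left, adjoint_inner_right]
  ring

theorem re_inner_apply_self (hT : IsBlockOperator A T) (x : K₁) (y : K₂) :
    re (inner 𝕜 (T (toLp 2 (x, y))) (toLp 2 (x, y))) = ‖x + A y‖ ^ 2 + ‖y‖ ^ 2 + ‖A y‖ ^ 2 := by
  rw [hT x y, prod_inner_apply]
  simp only [inner_add_left, two_smul, adjoint_inner_left, map_add, norm_add_sq (𝕜 := 𝕜),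
    inner_self_eq_norm_sq (𝕜 := 𝕜)]
  rw [inner_re_symm (A y)]
  ring

theorem opNorm_le (hT : IsBlockOperator A T) : ‖T‖ ≤ 1 + ‖A‖ ^ 2 + ‖A‖ * √(1 + ‖A‖ ^ 2) := by
  refine opNorm_le_of_abs_re_inner_self_le hT.isSymmetric (by positivity) ?_
  rintro ⟨x, y⟩
  rw [hT.re_inner_apply_self, abs_of_nonneg (by positivity), prod_norm_sq_eq_of_L2]
  have hAy := A.le_opNorm y
  calc ‖x + A y‖ ^ 2 + ‖y‖ ^ 2 + ‖A y‖ ^ 2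
      ≤ (‖x‖ + ‖A‖ * ‖y‖) ^ 2 + ‖y‖ ^ 2 + (‖A‖ * ‖y‖) ^ 2 := by
        gcongr
        exact norm_add_le_of_le le_rfl hAy
    _ ≤ _ := le_one_add_sq_add_mul_sqrt_mul (norm_nonneg A) _ _

theorem le_opNorm [Nontrivial K₂] (hT : IsBlockOperator A T) :
    1 + ‖A‖ ^ 2 + ‖A‖ * √(1 + ‖A‖ ^ 2) ≤ ‖T‖ := by
  have hQ (y : K₂) (s : ℝ) :
      (s + 1) ^ 2 * ‖A y‖ ^ 2 + ‖y‖ ^ 2 + ‖A y‖ ^ 2 ≤ ‖T‖ * (s ^ 2 * ‖A y‖ ^ 2 + ‖y‖ ^ 2) := by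
    have h := T.re_inner_apply_self_le (toLp 2 ((s : 𝕜) • A y, y))
    have hs : (s : 𝕜) • A y + A y = ((s + 1 : ℝ) : 𝕜) • A y := by
      rw [ofReal_add, ofReal_one, add_smul, one_smul]
    rwa [hT.re_inner_apply_self, prod_norm_sq_eq_of_L2, toLp_fst, toLp_snd, hs, norm_smul,
      norm_smul, norm_ofReal, norm_ofReal, mul_pow, mul_pow, sq_abs, sq_abs] at h
  have hc : 1 ≤ ‖T‖ := by
    obtain ⟨y, hy⟩ := exists_ne (0 : K₂)
    nlinarith [hQ y 0, pow_pos (norm_pos_iff.2 hy) 2, sq_nonneg ‖A y‖]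
  refine one_add_sq_add_mul_sqrt_le (norm_nonneg A) hc
    (A.sq_opNorm_le_of_sq_norm_apply_le (div_nonneg (sq_nonneg _) (by linarith)) fun y => ?_)
  rw [div_mul_eq_mul_div, le_div_iff₀ (by linarith)]
  exact mul_two_mul_sub_one_le_of_forall_le (sq_nonneg _) (sq_nonneg _) (hQ y)

end IsBlockOperator

end BlockOperator

open ContinuousLinearMap in
theorem norm_block_operator_eq_general
    {K₁ K₂ : Type*} [NormedAddCommGroup K₁] [InnerProductSpace ℂ K₁] [CompleteSpace K₁]
    [NormedAddCommGroup K₂] [InnerProductSpace ℂ K₂] [CompleteSpace K₂]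
    [Nontrivial K₂]
    (A : K₂ →L[ℂ] K₁)
    (T : WithLp 2 (K₁ × K₂) →L[ℂ] WithLp 2 (K₁ × K₂))
    (hT : ∀ (x : K₁) (y : K₂),
      T ((WithLp.equiv 2 (K₁ × K₂)).symm (x, y)) =
        (WithLp.equiv 2 (K₁ × K₂)).symm
          (x + A y, adjoint A x + (y + 2 • adjoint A (A y)))) :
    ‖T‖ = 1 + ‖A‖ ^ 2 + ‖A‖ * Real.sqrt (1 + ‖A‖ ^ 2) := by
  have hT : IsBlockOperator A T := hT
  exact le_antisymm hT.opNorm_le hT.le_opNorm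

open ContinuousLinearMap in
/-- Let `A : K₂ → K₁` be bounded and let `T` be the block operator
`[[I, A], [A*, I + 2A*A]]` on the Hilbert space direct sum `K₁ ⊕ K₂`.
Then `‖T‖ = 1 + ‖A‖² + ‖A‖√(1 + ‖A‖²)`. -/
theorem norm_block_operator_eq
    {K₁ K₂ : Type*} [NormedAddCommGroup K₁] [InnerProductSpace ℂ K₁] [CompleteSpace K₁]
    [NormedAddCommGroup K₂] [InnerProductSpace ℂ K₂] [CompleteSpace K₂]
    [Nontrivial K₁] [Nontrivial K₂]
    (A : K₂ →L[ℂ] K₁)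
    (T : WithLp 2 (K₁ × K₂) →L[ℂ] WithLp 2 (K₁ × K₂))
    (hT : ∀ (x : K₁) (y : K₂),
      T ((WithLp.equiv 2 (K₁ × K₂)).symm (x, y)) =
        (WithLp.equiv 2 (K₁ × K₂)).symm
          (x + A y, adjoint A x + (y + 2 • adjoint A (A y)))) :
    ‖T‖ = 1 + ‖A‖ ^ 2 + ‖A‖ * Real.sqrt (1 + ‖A‖ ^ 2) :=
  norm_block_operator_eq_general A T hT
end

section
/- Let K be a Hilbert space and D ∈ B(K) with D ≥ I. Define ℓ(D) = D^{1/2}(D-I)^{1/2} and Q̃ = [[D, -ℓ(D)], [ℓ(D), I - D]] on K ⊕ K. Then ‖Q̃‖ = 2‖D‖ − 1. -/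
/-!
Write `S = D^{1/2}`, `T = (D - I)^{1/2}` and let `J = [S; T] : K → K ⊕ K` be the column operator.
Since `S` and `T` commute, `Q̃ = J J* U` with the unitary `U = diag(I, -I)`, so by the
C⋆-identity `‖Q̃‖ = ‖J J*‖ = ‖J* J‖ = ‖S² + T²‖ = ‖2D - I‖`, and `‖2D - I‖ = 2‖D‖ - 1`
because `2D ≥ I`.
-/

open ContinuousLinearMap WithLp

namespace ContinuousLinearMap

variable {𝕜 E F G : Type*} [RCLike 𝕜]
  [NormedAddCommGroup E] [InnerProductSpace 𝕜 E]
  [NormedAddCommGroup F] [InnerProductSpace 𝕜 F]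
  [NormedAddCommGroup G] [InnerProductSpace 𝕜 G]

def col (S : E →L[𝕜] F) (T : E →L[𝕜] G) : E →L[𝕜] WithLp 2 (F × G) :=
  (prodContinuousLinearEquiv 2 𝕜 F G).symm.toContinuousLinearMap ∘L S.prod T

@[simp] lemma col_apply (S : E →L[𝕜] F) (T : E →L[𝕜] G) (x : E) :
    col S T x = toLp 2 (S x, T x) := rfl

variable [CompleteSpace E] [CompleteSpace F] [CompleteSpace G]

lemma norm_comp_adjoint_eq_norm_adjoint_comp (A : E →L[𝕜] F) :
    ‖A ∘L adjoint A‖ = ‖adjoint A ∘L A‖ := by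
  simpa [norm_adjoint_comp_self, adjoint_adjoint] using norm_adjoint_comp_self (adjoint A)

variable (S : E →L[𝕜] F) (T : E →L[𝕜] G)

lemma adjoint_col_apply (x : F) (y : G) :
    adjoint (col S T) (toLp 2 (x, y)) = adjoint S x + adjoint T y := by
  refine ext_inner_left 𝕜 fun z => ?_
  simp [adjoint_inner_right, inner_add_right]

lemma adjoint_comp_col : adjoint (col S T) ∘L col S T = adjoint S ∘L S + adjoint T ∘L T := by
  ext x; simp [adjoint_col_apply]

end ContinuousLinearMap

lemma CStarAlgebra.norm_sub_one_of_one_le {A : Type*} [CStarAlgebra A] [PartialOrder A]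
    [StarOrderedRing A] [Nontrivial A] {a : A} (ha : 1 ≤ a) : ‖a - 1‖ = ‖a‖ - 1 := by
  have ha0 : 0 ≤ a := zero_le_one.trans ha
  have hle : a - 1 ≤ algebraMap ℝ A (‖a‖ - 1) := by
    rw [map_sub, map_one]
    exact sub_le_sub_right (IsSelfAdjoint.of_nonneg ha0).le_algebraMap_norm_self 1
  refine le_antisymm ?_ ?_
  · have h1 : 1 ≤ ‖a‖ := by simpa using norm_le_norm_of_nonneg_of_le zero_le_one ha
    have := norm_le_norm_of_nonneg_of_le (sub_nonneg.2 ha) hle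
    rwa [norm_algebraMap', Real.norm_of_nonneg (sub_nonneg.2 h1)] at this
  · have := norm_sub_norm_le a 1
    rw [CStarRing.norm_one] at this
    linarith

/-- For a self-adjoint `D ≥ I` on a Hilbert space `K`, the block operator
`Q̃ = [[D, -ℓ(D)], [ℓ(D), I - D]]` on `K ⊕ K`, where `ℓ(D) = D^{1/2}(D-I)^{1/2}`,
has norm `‖Q̃‖ = 2‖D‖ - 1`. -/
theorem norm_block_idempotent_eq
    {K : Type*} [NormedAddCommGroup K] [InnerProductSpace ℂ K] [CompleteSpace K]
    [Nontrivial K]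
    (D : K →L[ℂ] K) (hD : (1 : K →L[ℂ] K) ≤ D)
    (Q : WithLp 2 (K × K) →L[ℂ] WithLp 2 (K × K))
    (hQ : ∀ (x y : K),
      Q ((WithLp.equiv 2 (K × K)).symm (x, y)) =
        (WithLp.equiv 2 (K × K)).symm
          (D x - (CFC.sqrt D * CFC.sqrt (D - 1)) y,
            (CFC.sqrt D * CFC.sqrt (D - 1)) x + ((1 - D) y))) :
    ‖Q‖ = 2 * ‖D‖ - 1 := by
  set S := CFC.sqrt D
  set T := CFC.sqrt (D - 1)
  have hD0 : 0 ≤ D := zero_le_one.trans hD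
  have hS : IsSelfAdjoint S := .of_nonneg (CFC.sqrt_nonneg D)
  have hT : IsSelfAdjoint T := .of_nonneg (CFC.sqrt_nonneg _)
  have hSS : S * S = D := CFC.sqrt_mul_sqrt_self D hD0
  have hTT : T * T = D - 1 := CFC.sqrt_mul_sqrt_self _ (sub_nonneg.2 hD)
  have hTS : Commute T S :=
    (((Commute.refl D).cfcₙ_nnreal _).sub_right (.one_right _)).symm.cfcₙ_nnreal _
  set J := col S T
  set U := LinearIsometryEquiv.withLpProdCongr 2 (LinearIsometryEquiv.refl ℂ K)
    (LinearIsometryEquiv.neg ℂ (E := K))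
  have hQJ : Q = (J ∘L adjoint J) ∘L U := by
    ext ⟨x, y⟩
    have h1D : 1 - D = -(T * T) := by rw [hTT, neg_sub]
    rw [← WithLp.equiv_symm_apply, hQ, h1D, ← hSS]
    simpa [J, U, adjoint_col_apply, hS.adjoint_eq, hT.adjoint_eq, sub_eq_add_neg]
      using DFunLike.congr_fun hTS.eq.symm x
  have hJJ : adjoint J ∘L J = D + D - 1 := by
    rw [adjoint_comp_col, hS.adjoint_eq, hT.adjoint_eq]
    change S * S + T * T = _
    rw [hSS, hTT, add_sub_assoc]
  calc ‖Q‖ = ‖J ∘L adjoint J‖ := by rw [hQJ, opNorm_comp_linearIsometryEquiv]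
    _ = ‖D + D - 1‖ := by rw [norm_comp_adjoint_eq_norm_adjoint_comp, hJJ]
    _ = 2 * ‖D‖ - 1 := by
      rw [CStarAlgebra.norm_sub_one_of_one_le (le_add_of_le_of_nonneg hD hD0), ← two_smul ℝ D,
        norm_smul, Real.norm_two]
end

section
/- Let K be a Hilbert space and let B ∈ B(K) be positive and invertible with B ≥ I. Set D = (I + B)/2. Then the block operator W on K ⊕ K given by W = [[B^{-1/2}D^{1/2}, B^{-1/2}(D-I)^{1/2}], [B^{-1/2}(D-I)^{1/2}, -B^{-1/2}D^{1/2}]] satisfies W = W* and W² = I, i.e. W is a unitary symmetry. -/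
/-!
The entries `P = B^{-1/2} D^{1/2}` and `Q = B^{-1/2} (D - 1)^{1/2}` are products of square roots
of operators commuting with `B`, hence commuting self-adjoint operators, and
`P² + Q² = B⁻¹ (D + (D - 1)) = B⁻¹ (2D - 1) = 1`. A block operator `[[P, Q], [Q, -P]]` with such
entries is self-adjoint, and its square is `[[P² + Q², PQ - QP], [QP - PQ, Q² + P²]] = 1`.
-/

open CFC

open scoped ENNReal

theorem mul_self_eq_one_of_apply_equiv_symm {R K : Type*} [Ring R] [TopologicalSpace K]
    [AddCommGroup K] [IsTopologicalAddGroup K] [Module R K] {p : ℝ≥0∞} {P Q : K →L[R] K}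
    {W : WithLp p (K × K) →L[R] WithLp p (K × K)}
    (hPQ : Commute P Q) (hsum : P * P + Q * Q = 1)
    (hW : ∀ x y : K, W ((WithLp.equiv p (K × K)).symm (x, y)) =
      (WithLp.equiv p (K × K)).symm (P x + Q y, Q x - P y)) :
    W * W = 1 := by
  have hsum_apply (x : K) : P (P x) + Q (Q x) = x := congr($hsum x)
  have hPQ_apply (x : K) : P (Q x) = Q (P x) := congr($hPQ.eq x)
  ext1 z
  obtain ⟨⟨x, y⟩, rfl⟩ := (WithLp.equiv p (K × K)).symm.surjective z
  rw [mul_apply_eq_comp, one_apply_eq_self, hW, hW]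
  simp only [map_add, map_sub, hPQ_apply]
  congr 2
  · convert hsum_apply x using 1; abel
  · convert hsum_apply y using 1; abel

theorem isSelfAdjoint_of_apply_equiv_symm {𝕜 K : Type*} [RCLike 𝕜] [NormedAddCommGroup K]
    [InnerProductSpace 𝕜 K] [CompleteSpace K] {P Q : K →L[𝕜] K}
    {W : WithLp 2 (K × K) →L[𝕜] WithLp 2 (K × K)}
    (hP : IsSelfAdjoint P) (hQ : IsSelfAdjoint Q)
    (hW : ∀ x y : K, W ((WithLp.equiv 2 (K × K)).symm (x, y)) =
      (WithLp.equiv 2 (K × K)).symm (P x + Q y, Q x - P y)) :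
    IsSelfAdjoint W := by
  have hP' : ∀ a b, inner 𝕜 (P a) b = inner 𝕜 a (P b) := hP.isSymmetric
  have hQ' : ∀ a b, inner 𝕜 (Q a) b = inner 𝕜 a (Q b) := hQ.isSymmetric
  rw [ContinuousLinearMap.isSelfAdjoint_iff_isSymmetric]
  intro u v
  obtain ⟨⟨x, y⟩, rfl⟩ := (WithLp.equiv 2 (K × K)).symm.surjective u
  obtain ⟨⟨x', y'⟩, rfl⟩ := (WithLp.equiv 2 (K × K)).symm.surjective v
  rw [ContinuousLinearMap.coe_coe, hW, hW]
  simp only [WithLp.prod_inner_apply, WithLp.equiv_symm_apply, inner_add_left, inner_sub_left,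
    inner_add_right, inner_sub_right, hP', hQ']
  ring

section Sqrt

variable {A : Type*} [CStarAlgebra A] [PartialOrder A] [StarOrderedRing A] {a b c : A}

theorem Commute.cfcSqrt (h : Commute a b) : Commute (sqrt a) (sqrt b) :=
  ((h.cfcₙ_nnreal _).symm.cfcₙ_nnreal _).symm

theorem isSelfAdjoint_sqrt_mul_sqrt (h : Commute a b) : IsSelfAdjoint (sqrt a * sqrt b) :=
  ((sqrt_nonneg a).isSelfAdjoint.commute_iff (sqrt_nonneg b).isSelfAdjoint).mp h.cfcSqrt

theorem sqrt_mul_sqrt_mul_self (h : Commute a b) (ha : 0 ≤ a) (hb : 0 ≤ b) :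
    sqrt a * sqrt b * (sqrt a * sqrt b) = a * b := by
  rw [h.cfcSqrt.symm.mul_mul_mul_comm, sqrt_mul_sqrt_self a, sqrt_mul_sqrt_self b]

theorem Commute.sqrt_mul_sqrt (hab : Commute a b) (hac : Commute a c) (hbc : Commute b c) :
    Commute (sqrt a * sqrt b) (sqrt a * sqrt c) :=
  ((Commute.refl _).mul_left hab.cfcSqrt.symm).mul_right (hac.cfcSqrt.mul_left hbc.cfcSqrt)

end Sqrt

theorem block_unitary_symmetry_general
    {K : Type*} [NormedAddCommGroup K] [InnerProductSpace ℂ K] [CompleteSpace K]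
    (B : K →L[ℂ] K) [Invertible B]
    (hB : (1 : K →L[ℂ] K) ≤ B)
    (W : WithLp 2 (K × K) →L[ℂ] WithLp 2 (K × K))
    (hW : ∀ (x y : K),
      W ((WithLp.equiv 2 (K × K)).symm (x, y)) =
        (WithLp.equiv 2 (K × K)).symm
          ((CFC.sqrt (⅟B) * CFC.sqrt ((2 : ℝ)⁻¹ • (1 + B))) x
              + (CFC.sqrt (⅟B) * CFC.sqrt ((2 : ℝ)⁻¹ • (1 + B) - 1)) y,
            (CFC.sqrt (⅟B) * CFC.sqrt ((2 : ℝ)⁻¹ • (1 + B) - 1)) x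
              - (CFC.sqrt (⅟B) * CFC.sqrt ((2 : ℝ)⁻¹ • (1 + B))) y)) :
    IsSelfAdjoint W ∧ W * W = 1 := by
  set D : K →L[ℂ] K := (2 : ℝ)⁻¹ • (1 + B)
  have hB0 : 0 ≤ B := zero_le_one.trans hB
  have hBinv : 0 ≤ ⅟B := inv_nonneg_of_nonneg (unitOfInvertible B) hB0
  have hD : 0 ≤ D := smul_nonneg (by norm_num) (add_nonneg zero_le_one hB0)
  have hD1 : 0 ≤ D - 1 := by
    rw [show D - 1 = (2 : ℝ)⁻¹ • (B - 1) by module]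
    exact smul_nonneg (by norm_num) (sub_nonneg.mpr hB)
  have hBD : Commute B D := ((Commute.one_right B).add_right (Commute.refl B)).smul_right _
  have hBD1 : Commute B (D - 1) := hBD.sub_right (Commute.one_right B)
  have hDD1 : Commute D (D - 1) := (Commute.refl D).sub_right (Commute.one_right D)
  have hsum : sqrt (⅟B) * sqrt D * (sqrt (⅟B) * sqrt D) +
      sqrt (⅟B) * sqrt (D - 1) * (sqrt (⅟B) * sqrt (D - 1)) = 1 := by
    rw [sqrt_mul_sqrt_mul_self hBD.invOf_left hBinv hD,
      sqrt_mul_sqrt_mul_self hBD1.invOf_left hBinv hD1, ← mul_add,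
      show D + (D - 1) = B by module, invOf_mul_self]
  exact ⟨isSelfAdjoint_of_apply_equiv_symm (isSelfAdjoint_sqrt_mul_sqrt hBD.invOf_left)
      (isSelfAdjoint_sqrt_mul_sqrt hBD1.invOf_left) hW,
    mul_self_eq_one_of_apply_equiv_symm (hBD.invOf_left.sqrt_mul_sqrt hBD1.invOf_left hDD1) hsum hW⟩

/-- Let `B` be positive invertible with `B ≥ I` on a Hilbert space `K`, and set
`D = (I + B)/2`. Then the block operator
`W = [[B^{-1/2}D^{1/2}, B^{-1/2}(D-I)^{1/2}], [B^{-1/2}(D-I)^{1/2}, -B^{-1/2}D^{1/2}]]`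
on `K ⊕ K` is a unitary symmetry: `W = W*` and `W² = I`. -/
theorem block_unitary_symmetry
    {K : Type*} [NormedAddCommGroup K] [InnerProductSpace ℂ K] [CompleteSpace K]
    (B : K →L[ℂ] K) [Invertible B] (hBpos : (0 : K →L[ℂ] K) ≤ B)
    (hB : (1 : K →L[ℂ] K) ≤ B)
    (W : WithLp 2 (K × K) →L[ℂ] WithLp 2 (K × K))
    (hW : ∀ (x y : K),
      W ((WithLp.equiv 2 (K × K)).symm (x, y)) =
        (WithLp.equiv 2 (K × K)).symm
          ((CFC.sqrt (⅟B) * CFC.sqrt ((2 : ℝ)⁻¹ • (1 + B))) x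
              + (CFC.sqrt (⅟B) * CFC.sqrt ((2 : ℝ)⁻¹ • (1 + B) - 1)) y,
            (CFC.sqrt (⅟B) * CFC.sqrt ((2 : ℝ)⁻¹ • (1 + B) - 1)) x
              - (CFC.sqrt (⅟B) * CFC.sqrt ((2 : ℝ)⁻¹ • (1 + B))) y)) :
    IsSelfAdjoint W ∧ W * W = 1 :=
  block_unitary_symmetry_general B hB W hW
end

section
/- Let D ∈ B(K) satisfy I ≤ D and d := ‖D‖ > 1, and let a < d/(2d−1). Define D_a = (D − aI)/‖D − aI‖. Then ‖D − aI‖ = d − a, D_a is positive definite, and D_a − ℓ(D)/ℓ(d) = A(dI − D) for some positive definite A ∈ B(K); in particular D_a ≥ ℓ(D)/ℓ(d). -/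
/-!
Every operator in the statement is a continuous function of the single self-adjoint operator `D`,
whose spectrum lies in `[1, d]` and contains `d`, so each claim reduces through the continuous
functional calculus to a statement about real functions on `[1, d]`. Multiplying
`(x - a)/(d - a) - ℓ(x)/ℓ(d)` by the conjugate `ℓ(d)(x - a) + (d - a)ℓ(x)` and using
`ℓ(x)² = x² - x` turns it into `(d - x) g(x)`, where the numerator of `g` is affine in `x`;
the condition `a < d/(2d - 1)` is exactly what makes it positive at both ends of `[1, d]`.
The factor is then `A = g(D)`.
-/

open Set

/-- The paper's `ℓ(x) = √(x² - x)`, written so that `ℓ(D) = √D √(D - 1)`. -/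
noncomputable def ell (x : ℝ) : ℝ := √x * √(x - 1)

/-- The function `g` with `A = g(D)`; its numerator is
`(ℓ(d)²(x - a)² - (d - a)²ℓ(x)²) / (d - x)`. -/
noncomputable def ellFactor (d a x : ℝ) : ℝ :=
  (((d - a) ^ 2 - (d ^ 2 - d)) * x + a ^ 2 * (d - 1)) /
    ((d - a) * ell d * (ell d * (x - a) + (d - a) * ell x))

section Scalar

variable {d a x : ℝ}

lemma ell_nonneg (x : ℝ) : 0 ≤ ell x := by unfold ell; positivity

lemma ell_pos (hx : 1 < x) : 0 < ell x :=
  mul_pos (Real.sqrt_pos.2 (by linarith)) (Real.sqrt_pos.2 (by linarith))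

lemma ell_sq (hx : 1 ≤ x) : ell x ^ 2 = x ^ 2 - x := by
  rw [ell, mul_pow, Real.sq_sqrt (by linarith), Real.sq_sqrt (by linarith)]; ring

lemma sqrt_mul_sub_one_eq_ell (hx : 0 ≤ x) : √(x * (x - 1)) = ell x := Real.sqrt_mul hx _

@[fun_prop]
lemma continuous_ell : Continuous ell := by unfold ell; fun_prop

lemma lt_one_of_mul_two_mul_sub_one_lt (hd : 1 < d) (ha : a * (2 * d - 1) < d) : a < 1 := by
  by_contra! h
  nlinarith

lemma ellFactor_numerator_pos (hd : 1 < d) (ha : a * (2 * d - 1) < d) (hx1 : 1 ≤ x)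
    (hxd : x ≤ d) : 0 < ((d - a) ^ 2 - (d ^ 2 - d)) * x + a ^ 2 * (d - 1) := by
  have ha1 := lt_one_of_mul_two_mul_sub_one_lt hd ha
  -- the values at `x = 1` and at `x = d`
  have h1 : 0 < d * (1 - a) ^ 2 := by nlinarith
  have hd' : 0 < (d - a * (2 * d - 1)) * (d - a) := by nlinarith
  nlinarith [mul_nonneg (sub_nonneg.2 hxd) h1.le, mul_nonneg (sub_nonneg.2 hx1) hd'.le]

lemma ell_mul_sub_add_sub_mul_ell_pos (hd : 1 < d) (ha : a < 1) (hx : 1 ≤ x) :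
    0 < ell d * (x - a) + (d - a) * ell x := by
  have := mul_nonneg (sub_nonneg.2 (by linarith : a ≤ d)) (ell_nonneg x)
  nlinarith [ell_pos hd]

lemma ellFactor_pos (hd : 1 < d) (ha : a * (2 * d - 1) < d) (hx1 : 1 ≤ x) (hxd : x ≤ d) :
    0 < ellFactor d a x := by
  have ha1 := lt_one_of_mul_two_mul_sub_one_lt hd ha
  exact div_pos (ellFactor_numerator_pos hd ha hx1 hxd)
    (mul_pos (mul_pos (by linarith) (ell_pos hd)) (ell_mul_sub_add_sub_mul_ell_pos hd ha1 hx1))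

lemma continuousOn_ellFactor (hd : 1 < d) (ha : a < 1) :
    ContinuousOn (ellFactor d a) (Ici 1) := by
  refine ContinuousOn.div (by fun_prop) (by fun_prop) fun x hx => ?_
  exact (mul_pos (mul_pos (by linarith) (ell_pos hd))
    (ell_mul_sub_add_sub_mul_ell_pos hd ha hx)).ne'

lemma inv_mul_sub_sub_inv_mul_ell_eq_ellFactor_mul (hd : 1 < d) (ha : a < 1) (hx : 1 ≤ x) :
    (d - a)⁻¹ * (x - a) - (ell d)⁻¹ * ell x = ellFactor d a x * (d - x) := by
  have hL := ell_pos hd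
  have hS := ell_mul_sub_add_sub_mul_ell_pos hd ha hx
  have hda : d - a ≠ 0 := by linarith
  rw [ellFactor, div_mul_eq_mul_div, eq_div_iff (by positivity)]
  field_simp
  linear_combination (x - a) ^ 2 * ell_sq hd.le - (d - a) ^ 2 * ell_sq hx

end Scalar

section CStarAlgebra

variable {A : Type*} [CStarAlgebra A] {D : A}

lemma IsSelfAdjoint.sub_algebraMap_eq_cfc (hD : IsSelfAdjoint D) (r : ℝ) :
    D - algebraMap ℝ A r = cfc (fun x => x - r) D := by
  rw [cfc_sub _ _ D, cfc_id' ℝ D, cfc_const r D]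

lemma IsSelfAdjoint.algebraMap_sub_eq_cfc (hD : IsSelfAdjoint D) (r : ℝ) :
    algebraMap ℝ A r - D = cfc (fun x => r - x) D := by
  rw [cfc_sub _ _ D, cfc_id' ℝ D, cfc_const r D]

variable [PartialOrder A] [StarOrderedRing A] {a : ℝ}

lemma spectrum_subset_Icc_of_one_le (hD : 1 ≤ D) : spectrum ℝ D ⊆ Icc 1 ‖D‖ := by
  have hsa : IsSelfAdjoint D := .of_nonneg (zero_le_one.trans hD)
  exact fun x hx => ⟨(CFC.one_le_iff D).1 hD x hx,
    (le_algebraMap_iff_spectrum_le hsa).1 hsa.le_algebraMap_norm_self x hx⟩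

lemma norm_sub_algebraMap_of_algebraMap_le [Nontrivial A] (hD : 0 ≤ D)
    (haD : algebraMap ℝ A a ≤ D) : ‖D - algebraMap ℝ A a‖ = ‖D‖ - a := by
  have hsa : IsSelfAdjoint D := .of_nonneg hD
  have hle : ∀ x ∈ spectrum ℝ D, x ≤ ‖D‖ :=
    (le_algebraMap_iff_spectrum_le hsa).1 hsa.le_algebraMap_norm_self
  have hge : ∀ x ∈ spectrum ℝ D, a ≤ x := (algebraMap_le_iff_le_spectrum hsa).1 haD
  have hmem : ‖D‖ ∈ spectrum ℝ D := CStarAlgebra.norm_mem_spectrum_of_nonneg hD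
  rw [hsa.sub_algebraMap_eq_cfc]
  refine (IsGreatest.norm_cfc _ D).unique
    ⟨⟨‖D‖, hmem, Real.norm_of_nonneg (sub_nonneg.2 (hge _ hmem))⟩, ?_⟩
  rintro _ ⟨x, hx, rfl⟩
  simp only [Real.norm_of_nonneg (sub_nonneg.2 (hge x hx))]
  linarith [hle x hx]

lemma CFC.sqrt_cfc (f : ℝ → ℝ) (b : A) (hf : ContinuousOn f (spectrum ℝ b))
    (hf0 : ∀ x ∈ spectrum ℝ b, 0 ≤ f x) :
    CFC.sqrt (cfc f b) = cfc (fun x => √(f x)) b := by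
  refine CFC.sqrt_unique ?_ (cfc_nonneg fun x _ => Real.sqrt_nonneg _)
  rw [← cfc_mul _ _ b]
  exact cfc_congr fun x hx => Real.mul_self_sqrt (hf0 x hx)

lemma CFC.sqrt_mul_sqrt_sub_one (hD : 1 ≤ D) :
    CFC.sqrt D * CFC.sqrt (D - 1) = cfc ell D := by
  have hsa : IsSelfAdjoint D := .of_nonneg (zero_le_one.trans hD)
  have hspec := spectrum_subset_Icc_of_one_le hD
  have hD1 : D - 1 = cfc (fun x : ℝ => x - 1) D := by
    rw [← map_one (algebraMap ℝ A), hsa.sub_algebraMap_eq_cfc]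
  nth_rw 1 [← cfc_id' ℝ D]
  rw [hD1, CFC.sqrt_cfc _ D (by fun_prop) fun x hx => zero_le_one.trans (hspec hx).1,
    CFC.sqrt_cfc _ D (by fun_prop) fun x hx => sub_nonneg.2 (hspec hx).1, ← cfc_mul _ _ D]
  rfl

lemma isStrictlyPositive_inv_smul_sub_algebraMap (hD : 1 ≤ D) (ha : a < 1) :
    IsStrictlyPositive ((‖D‖ - a)⁻¹ • (D - algebraMap ℝ A a)) := by
  have hsa : IsSelfAdjoint D := .of_nonneg (zero_le_one.trans hD)
  have hspec := spectrum_subset_Icc_of_one_le hD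
  rw [hsa.sub_algebraMap_eq_cfc, ← cfc_smul _ _ D, cfc_isStrictlyPositive_iff _ D]
  intro x hx
  obtain ⟨h1x, hxD⟩ := hspec hx
  exact mul_pos (inv_pos.2 (by linarith)) (by linarith)

lemma isStrictlyPositive_cfc_ellFactor (hD : 1 ≤ D) (hd : 1 < ‖D‖)
    (ha : a * (2 * ‖D‖ - 1) < ‖D‖) : IsStrictlyPositive (cfc (ellFactor ‖D‖ a) D) := by
  have hspec := spectrum_subset_Icc_of_one_le hD
  rw [cfc_isStrictlyPositive_iff _ D ((continuousOn_ellFactor hd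
      (lt_one_of_mul_two_mul_sub_one_lt hd ha)).mono fun x hx => (hspec hx).1)
    (.of_nonneg (zero_le_one.trans hD))]
  exact fun x hx => ellFactor_pos hd ha (hspec hx).1 (hspec hx).2

lemma inv_smul_sub_sub_inv_smul_sqrt_mul_sqrt_eq_cfc_ellFactor_mul (hD : 1 ≤ D)
    (hd : 1 < ‖D‖) (ha : a < 1) :
    (‖D‖ - a)⁻¹ • (D - algebraMap ℝ A a) - (ell ‖D‖)⁻¹ • (CFC.sqrt D * CFC.sqrt (D - 1)) =
      cfc (ellFactor ‖D‖ a) D * (algebraMap ℝ A ‖D‖ - D) := by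
  have hsa : IsSelfAdjoint D := .of_nonneg (zero_le_one.trans hD)
  have hspec := spectrum_subset_Icc_of_one_le hD
  rw [CFC.sqrt_mul_sqrt_sub_one hD, hsa.sub_algebraMap_eq_cfc, hsa.algebraMap_sub_eq_cfc,
    ← cfc_smul _ _ D, ← cfc_smul _ _ D, ← cfc_sub _ _ D,
    ← cfc_mul _ _ D ((continuousOn_ellFactor hd ha).mono fun x hx => (hspec hx).1)]
  exact cfc_congr fun x hx =>
    inv_mul_sub_sub_inv_mul_ell_eq_ellFactor_mul hd ha (hspec hx).1

end CStarAlgebra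

/-- Let `D ≥ I` with `d = ‖D‖ > 1`, and let `a < d/(2d-1)`. Set
`D_a = (D - aI)/‖D - aI‖`. Then `‖D - aI‖ = d - a`, `D_a` is positive definite, and
`D_a - ℓ(D)/ℓ(d) = A(dI - D)` for some positive definite `A`; in particular
`D_a ≥ ℓ(D)/ℓ(d)`. -/
theorem Da_sub_ell_factorization
    {K : Type*} [NormedAddCommGroup K] [InnerProductSpace ℂ K] [CompleteSpace K]
    (D : K →L[ℂ] K) (hD : (1 : K →L[ℂ] K) ≤ D) (hd : 1 < ‖D‖)
    (a : ℝ) (ha : a < ‖D‖ / (2 * ‖D‖ - 1)) :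
    ‖D - a • 1‖ = ‖D‖ - a ∧
      (0 : K →L[ℂ] K) ≤ ‖D - a • 1‖⁻¹ • (D - a • 1) ∧
      IsUnit (‖D - a • 1‖⁻¹ • (D - a • 1)) ∧
      (∃ A : K →L[ℂ] K, (0 : K →L[ℂ] K) ≤ A ∧ IsUnit A ∧
        ‖D - a • 1‖⁻¹ • (D - a • 1)
            - (Real.sqrt (‖D‖ * (‖D‖ - 1)))⁻¹ • (CFC.sqrt D * CFC.sqrt (D - 1)) =
          A * (‖D‖ • 1 - D)) ∧
      (Real.sqrt (‖D‖ * (‖D‖ - 1)))⁻¹ • (CFC.sqrt D * CFC.sqrt (D - 1)) ≤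
        ‖D - a • 1‖⁻¹ • (D - a • 1) := by
  have : Nontrivial (K →L[ℂ] K) := nontrivial_of_ne D 0 (by rintro rfl; norm_num at hd)
  have hsa : IsSelfAdjoint D := .of_nonneg (zero_le_one.trans hD)
  have ha' : a * (2 * ‖D‖ - 1) < ‖D‖ := (lt_div_iff₀ (by linarith)).1 ha
  have ha1 := lt_one_of_mul_two_mul_sub_one_lt hd ha'
  have hnorm : ‖D - a • 1‖ = ‖D‖ - a := by
    rw [← Algebra.algebraMap_eq_smul_one]
    refine norm_sub_algebraMap_of_algebraMap_le (zero_le_one.trans hD) ?_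
    exact (algebraMap_le_iff_le_spectrum hsa).2 fun x hx => by
      linarith [(spectrum_subset_Icc_of_one_le hD hx).1]
  have hDa := isStrictlyPositive_inv_smul_sub_algebraMap hD ha1
  have hA := isStrictlyPositive_cfc_ellFactor hD hd ha'
  have hfac := inv_smul_sub_sub_inv_smul_sqrt_mul_sqrt_eq_cfc_ellFactor_mul hD hd ha1
  refine ⟨hnorm, ?_⟩
  rw [hnorm, sqrt_mul_sub_one_eq_ell (by positivity)]
  simp only [← Algebra.algebraMap_eq_smul_one]
  refine ⟨hDa.nonneg, hDa.isUnit, ⟨_, hA.nonneg, hA.isUnit, hfac⟩, ?_⟩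
  have hcomm : Commute (cfc (ellFactor ‖D‖ a) D) (algebraMap ℝ _ ‖D‖ - D) := by
    rw [hsa.algebraMap_sub_eq_cfc]; exact cfc_commute_cfc _ _ D
  rw [← sub_nonneg, hfac]
  exact hcomm.mul_nonneg hA.nonneg (sub_nonneg.2 hsa.le_algebraMap_norm_self)
end

section
/- Let d > 1 and for each t ∈ [1, d] let f_t be the 2×2 matrix [[t+1, −√(t(t−1))], [0, 0]]. For real t₁, t₂ with 1 ≤ t₁ ≤ t₂ ≤ d, the support function of W(f_{t₁}) is pointwise dominated by that of W(f_{t₂}); consequently W(f_{t₁}) ⊆ W(f_{t₂}), and ∪_{t ∈ [1,d]} W(f_t) = W(f_d). -/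
/-- The numerical range of a `2 × 2` complex matrix. -/
def matrixNumericalRange (A : Matrix (Fin 2) (Fin 2) ℂ) : Set ℂ :=
  {z : ℂ | ∃ x : EuclideanSpace ℂ (Fin 2), ‖x‖ = 1 ∧
    z = inner ℂ (Matrix.toEuclideanLin A x) x}

/-- The support function of a subset `E ⊆ ℂ`: `h_E(α) = sup {Re (z e^{-iα}) : z ∈ E}`. -/
noncomputable def supportFn (E : Set ℂ) (α : ℝ) : ℝ :=
  sSup ((fun z : ℂ => (z * Complex.exp (-(α : ℂ) * Complex.I)).re) '' E)

/-- The matrix `f_t = [[t+1, −√(t(t−1))], [0, 0]]`. -/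
noncomputable def fMat (t : ℝ) : Matrix (Fin 2) (Fin 2) ℂ :=
  !![(t : ℂ) + 1, -(Real.sqrt (t * (t - 1)) : ℂ); 0, 0]

/-!
For a unit vector `(a, b)`, `⟪f_t (a, b), (a, b)⟫ = (t + 1) |a|² - √(t (t - 1)) b̄ a`, and for fixed
`p = |a|²` the second term sweeps a full circle. So `W(f_t)` is the union over `p ∈ [0, 1]` of the
circles centred at `(t + 1) p` with squared radius `t (t - 1) p (1 - p)`. At a common centre the
radius grows with `t`, so a point of `W(f_{t₁})` lies inside a circle of `W(f_{t₂})` and outside the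
degenerate circle at `0`; by continuity it lies on a circle of `W(f_{t₂})` in between. Monotonicity
of the support functions and the union formula follow from the inclusions.
-/

open Complex ComplexConjugate

lemma inner_toEuclideanLin_of_second_row_zero (c m a b : ℂ) :
    inner ℂ (Matrix.toEuclideanLin !![c, m; 0, 0] !₂[a, b]) !₂[a, b] =
      conj c * normSq a + conj m * conj b * a := by
  simp [PiLp.inner_apply, Fin.sum_univ_two, ← Complex.mul_conj]
  ring

lemma mem_matrixNumericalRange_iff {A : Matrix (Fin 2) (Fin 2) ℂ} {z : ℂ} :
    z ∈ matrixNumericalRange A ↔ ∃ a b : ℂ, normSq a + normSq b = 1 ∧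
      z = inner ℂ (Matrix.toEuclideanLin A !₂[a, b]) !₂[a, b] := by
  constructor
  · rintro ⟨x, hx, rfl⟩
    have hx₂ : x = !₂[x 0, x 1] := by ext i; fin_cases i <;> rfl
    refine ⟨x 0, x 1, ?_, by rw [← hx₂]⟩
    simpa [normSq_eq_norm_sq, hx] using (EuclideanSpace.norm_sq_eq x).symm
  · rintro ⟨a, b, hab, rfl⟩
    refine ⟨!₂[a, b], ?_, rfl⟩
    rw [← pow_eq_one_iff_of_nonneg (norm_nonneg _) two_ne_zero, EuclideanSpace.norm_sq_eq]
    simpa [normSq_eq_norm_sq] using hab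

lemma exists_normSq_eq_and_mul_eq {u w : ℂ} {r : ℝ} (hr : 0 ≤ r) (h : normSq w = normSq u * r) :
    ∃ v : ℂ, normSq v = r ∧ u * v = w := by
  rcases eq_or_ne u 0 with rfl | hu
  · refine ⟨Real.sqrt r, by simp [Real.mul_self_sqrt hr], ?_⟩
    simp_all
  · refine ⟨w / u, ?_, mul_div_cancel₀ w hu⟩
    rw [normSq_div, h, mul_div_cancel_left₀ _ (normSq_pos.2 hu).ne']

lemma mem_matrixNumericalRange_of_second_row_zero_iff {c m z : ℂ} :
    z ∈ matrixNumericalRange !![c, m; 0, 0] ↔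
      ∃ p ∈ Set.Icc (0 : ℝ) 1, normSq (z - conj c * p) = normSq m * (p * (1 - p)) := by
  simp only [mem_matrixNumericalRange_iff, inner_toEuclideanLin_of_second_row_zero]
  constructor
  · rintro ⟨a, b, hab, rfl⟩
    refine ⟨normSq a, ⟨normSq_nonneg a, by linarith [normSq_nonneg b]⟩, ?_⟩
    rw [add_sub_cancel_left, normSq_mul, normSq_mul, normSq_conj, normSq_conj, ← hab]
    ring
  · rintro ⟨p, ⟨hp₀, hp₁⟩, h⟩
    have hu : normSq (conj m * (Real.sqrt p : ℂ)) = normSq m * p := by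
      rw [normSq_mul, normSq_conj, normSq_ofReal, Real.mul_self_sqrt hp₀]
    obtain ⟨v, hv, huv⟩ := exists_normSq_eq_and_mul_eq (u := conj m * (Real.sqrt p : ℂ))
      (w := z - conj c * p) (sub_nonneg.2 hp₁) (by rw [h, hu, mul_assoc])
    refine ⟨Real.sqrt p, conj v, ?_, ?_⟩
    · rw [normSq_conj, hv, normSq_ofReal, Real.mul_self_sqrt hp₀, add_sub_cancel]
    · rw [normSq_ofReal, Real.mul_self_sqrt hp₀, Complex.conj_conj]
      linear_combination -huv

lemma mem_matrixNumericalRange_fMat_iff {t : ℝ} (ht : 1 ≤ t) {z : ℂ} :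
    z ∈ matrixNumericalRange (fMat t) ↔
      ∃ p ∈ Set.Icc (0 : ℝ) 1, normSq (z - (t + 1) * p) = t * (t - 1) * (p * (1 - p)) := by
  have hs : 0 ≤ t * (t - 1) := by nlinarith
  simp [fMat, mem_matrixNumericalRange_of_second_row_zero_iff, Real.mul_self_sqrt hs]

/-- `t (t - 1) p (1 - p)` is the squared radius of the circle of `W(f_t)` centred at `(t + 1) p`. -/
lemma sq_radius_le_of_same_centre {t₁ t₂ p : ℝ} (h₁ : 1 ≤ t₁) (h₁₂ : t₁ ≤ t₂) (hp₀ : 0 ≤ p)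
    (hp₁ : p ≤ 1) :
    t₁ * (t₁ - 1) * (p * (1 - p)) ≤
      t₂ * (t₂ - 1) * ((t₁ + 1) * p / (t₂ + 1) * (1 - (t₁ + 1) * p / (t₂ + 1))) := by
  have ht₂ : t₂ + 1 ≠ 0 := by linarith
  have hq : (t₁ + 1) * p / (t₂ + 1) * (1 - (t₁ + 1) * p / (t₂ + 1)) =
      (t₁ + 1) * p * (t₂ + 1 - (t₁ + 1) * p) / (t₂ + 1) ^ 2 := by
    field_simp
  rw [hq, mul_div_assoc', le_div_iff₀ (by positivity)]
  have hd : 0 ≤ t₂ - t₁ := sub_nonneg.2 h₁₂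
  -- The difference of the two sides is
  -- `p ((1 - p) (t₂ + 1) (t₂ - t₁) (t₁ t₂ + t₁ + t₂ - 1) + p t₂ (t₂ - 1) (t₁ + 1) (t₂ - t₁))`.
  linarith [mul_nonneg (mul_nonneg (mul_nonneg hp₀ (sub_nonneg.2 hp₁)) (by linarith : 0 ≤ t₂ + 1))
      (mul_nonneg hd (by nlinarith : 0 ≤ t₁ * t₂ + t₁ + t₂ - 1)),
    mul_nonneg (mul_nonneg (mul_nonneg (mul_self_nonneg p) (by nlinarith : 0 ≤ t₂ * (t₂ - 1)))
      (by linarith : 0 ≤ t₁ + 1)) hd]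

lemma matrixNumericalRange_fMat_mono {t₁ t₂ : ℝ} (h₁ : 1 ≤ t₁) (h₁₂ : t₁ ≤ t₂) :
    matrixNumericalRange (fMat t₁) ⊆ matrixNumericalRange (fMat t₂) := by
  intro z hz
  obtain ⟨p, ⟨hp₀, hp₁⟩, hp⟩ := (mem_matrixNumericalRange_fMat_iff h₁).1 hz
  rw [mem_matrixNumericalRange_fMat_iff (h₁.trans h₁₂)]
  have ht₂ : 0 < t₂ + 1 := by linarith
  set q := (t₁ + 1) * p / (t₂ + 1) with hq
  have hq₀ : 0 ≤ q := by positivity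
  have hq₁ : q ≤ 1 := by rw [hq, div_le_one ht₂]; nlinarith
  have hcenter : ((t₂ : ℂ) + 1) * q = ((t₁ : ℂ) + 1) * p := by
    rw [hq]; push_cast; field_simp [show (t₂ : ℂ) + 1 ≠ 0 by exact_mod_cast ht₂.ne']
  -- `z` lies inside the circle of `W(f_{t₂})` centred at `(t₁ + 1) p = (t₂ + 1) q` and outside the
  -- degenerate one at `0`, so some circle centred in between passes through `z`.
  let g : ℝ → ℝ := fun x ↦ t₂ * (t₂ - 1) * (x * (1 - x)) - normSq (z - (t₂ + 1) * x)
  have hg₀ : g 0 ≤ 0 := by simp [g, normSq_nonneg]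
  have hgq : 0 ≤ g q := by
    simp only [g, hcenter, hp]
    linarith [sq_radius_le_of_same_centre h₁ h₁₂ hp₀ hp₁]
  obtain ⟨x, ⟨hx₀, hxq⟩, hx⟩ := intermediate_value_Icc hq₀ (by fun_prop) ⟨hg₀, hgq⟩
  exact ⟨x, ⟨hx₀, hxq.trans hq₁⟩, by linarith [show g x = 0 from hx]⟩

lemma matrixNumericalRange_nonempty (A : Matrix (Fin 2) (Fin 2) ℂ) :
    (matrixNumericalRange A).Nonempty :=
  ⟨_, EuclideanSpace.single 0 1, by simp, rfl⟩

lemma isBounded_matrixNumericalRange (A : Matrix (Fin 2) (Fin 2) ℂ) :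
    Bornology.IsBounded (matrixNumericalRange A) := by
  let L := LinearMap.toContinuousLinearMap (Matrix.toEuclideanLin A)
  refine isBounded_iff_forall_norm_le.2 ⟨‖L‖, ?_⟩
  rintro _ ⟨x, hx, rfl⟩
  calc ‖inner ℂ (L x) x‖ ≤ ‖L x‖ * ‖x‖ := norm_inner_le_norm _ _
    _ ≤ ‖L‖ * ‖x‖ * ‖x‖ := by gcongr; exact L.le_opNorm x
    _ = ‖L‖ := by rw [hx, mul_one, mul_one]

lemma supportFn_mono {E F : Set ℂ} (hE : E.Nonempty) (hF : Bornology.IsBounded F) (hEF : E ⊆ F)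
    (α : ℝ) : supportFn E α ≤ supportFn F α := by
  obtain ⟨R, hR⟩ := isBounded_iff_forall_norm_le.1 hF
  refine csSup_le_csSup ⟨R, ?_⟩ (hE.image _) (Set.image_mono hEF)
  rintro _ ⟨z, hz, rfl⟩
  calc (z * exp (-(α : ℂ) * I)).re ≤ ‖z * exp (-(α : ℂ) * I)‖ := re_le_norm _
    _ = ‖z‖ := by simp [norm_exp]
    _ ≤ R := hR z hz

/-- For `1 ≤ t₁ ≤ t₂ ≤ d`, the support function of `W(f_{t₁})` is dominated by that of
`W(f_{t₂})`, hence `W(f_{t₁}) ⊆ W(f_{t₂})`; consequently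
`⋃_{t ∈ [1,d]} W(f_t) = W(f_d)`. -/
theorem numRange_fMat_monotone_and_union (d : ℝ) (hd : 1 < d) :
    (∀ t₁ t₂ : ℝ, 1 ≤ t₁ → t₁ ≤ t₂ → t₂ ≤ d →
      (∀ α : ℝ, supportFn (matrixNumericalRange (fMat t₁)) α ≤
          supportFn (matrixNumericalRange (fMat t₂)) α) ∧
        matrixNumericalRange (fMat t₁) ⊆ matrixNumericalRange (fMat t₂)) ∧
      ⋃ t ∈ Set.Icc (1 : ℝ) d, matrixNumericalRange (fMat t) =
        matrixNumericalRange (fMat d) := by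
  refine ⟨fun t₁ t₂ h₁ h₁₂ _ ↦ ?_, ?_⟩
  · have hsub := matrixNumericalRange_fMat_mono h₁ h₁₂
    exact ⟨supportFn_mono (matrixNumericalRange_nonempty _)
      (isBounded_matrixNumericalRange _) hsub, hsub⟩
  · refine (Set.iUnion₂_subset fun t ht ↦ matrixNumericalRange_fMat_mono ht.1 ht.2).antisymm ?_
    exact Set.subset_biUnion_of_mem (u := fun t ↦ matrixNumericalRange (fMat t)) ⟨hd.le, le_rfl⟩
end
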